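/- Fix an integer n ≥ 1, let V̄(y) := 1/y (so that (−1)^k V̄^(k)(y) = k! y^{−k−1}), and let f : (0,∞) → ℝ be continuous with 1 ≤ f(y) ≤ 2 for all y > 0. Define V(y) := ∫_y^∞ ∫_{y₁}^∞ ⋯ ∫_{y_{n−1}}^∞ n! y_n^{−n−1} f(y_n) dy_n ⋯ dy₂ dy₁ for y > 0. Then V is well defined and finite, n-times differentiable, with V^(n)(y) = f(y) V̄^(n)(y) = (−1)^n n! f(y) y^{−n−1}; moreover k! y^{−k−1} = (−1)^k V̄^(k)(y) ≤ (−1)^k V^(k)(y) ≤ 2 (−1)^k V̄^(k)(y) = 2·k! y^{−k−1} for all y > 0 and k = 0,1,…,n, and consequently (k+1)/2 ≤ −y V^(k+1)(y)/V^(k)(y) ≤ 2(k+1) for all y > 0 and k = 0,1,…,n−1. -/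

import Mathlib

/-! Put `g t = n! f t / t^(n+1)`, so that `n!/t^(n+1) ≤ g t ≤ 2 n!/t^(n+1)`. Since
`t ↦ -k!/t^(k+1)` is an antiderivative of `(k+1)!/t^(k+2)` vanishing at infinity, integrating from
`y` to `∞` a function squeezed between `c (k+1)!/t^(k+2)` and `C (k+1)!/t^(k+2)` gives one squeezed
between `c k!/y^(k+1)` and `C k!/y^(k+1)`, and the fundamental theorem of calculus identifies its
derivative. Hence the `j`-fold iterated integral of `g` is squeezed at level `n - j`. As
`(-1)^k V^(k)` is the `(n - k)`-fold iterated integral of `g`, these are the claimed bounds, and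
the ratio bounds are quotients of the bounds at two consecutive levels. -/

open MeasureTheory Filter Set Topology

/-- Iterated integration "from infinity": `iterIoiIntegral g 0 = g` and
`iterIoiIntegral g (j+1) y = ∫_{y}^{∞} iterIoiIntegral g j`. -/
noncomputable def iterIoiIntegral (g : ℝ → ℝ) : ℕ → ℝ → ℝ
  | 0 => g
  | j + 1 => fun y => ∫ t in Set.Ioi y, iterIoiIntegral g j t

open scoped Nat

lemma hasDerivAt_neg_factorial_div_pow (k : ℕ) {t : ℝ} (ht : t ≠ 0) :
    HasDerivAt (fun s : ℝ => -(k ! / s ^ (k + 1))) ((k + 1)! / t ^ (k + 2)) t := by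
  refine ((hasDerivAt_const t (k ! : ℝ)).fun_div (hasDerivAt_pow (k + 1) t)
    (pow_ne_zero _ ht)).neg.congr_deriv ?_
  push_cast [Nat.factorial_succ]
  field_simp
  ring

lemma tendsto_neg_factorial_div_pow_atTop (k : ℕ) :
    Tendsto (fun s : ℝ => -(k ! / s ^ (k + 1))) atTop (𝓝 0) := by
  simpa using ((tendsto_const_nhds (x := (k ! : ℝ))).div_atTop
    (tendsto_pow_atTop k.succ_ne_zero)).neg

lemma integrableOn_Ioi_factorial_div_pow (k : ℕ) {y : ℝ} (hy : 0 < y) :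
    IntegrableOn (fun t : ℝ => (k + 1)! / t ^ (k + 2)) (Ioi y) :=
  integrableOn_Ioi_deriv_of_nonneg'
    (fun t ht => hasDerivAt_neg_factorial_div_pow k (hy.trans_le ht).ne')
    (fun t ht => by have : 0 < t := hy.trans ht; positivity) (tendsto_neg_factorial_div_pow_atTop k)

lemma integral_Ioi_factorial_div_pow (k : ℕ) {y : ℝ} (hy : 0 < y) :
    ∫ t in Ioi y, ((k + 1)! : ℝ) / t ^ (k + 2) = k ! / y ^ (k + 1) := by
  rw [integral_Ioi_of_hasDerivAt_of_tendsto'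
    (fun t ht => hasDerivAt_neg_factorial_div_pow k (hy.trans_le ht).ne')
    (integrableOn_Ioi_factorial_div_pow k hy) (tendsto_neg_factorial_div_pow_atTop k)]
  ring

lemma hasDerivAt_integral_Ioi {h : ℝ → ℝ} {a y : ℝ} (hi : IntegrableOn h (Ioi a))
    (hc : ContinuousOn h (Ioi a)) (hay : a < y) :
    HasDerivAt (fun s => ∫ t in Ioi s, h t) (-h y) y := by
  have hsplit : (fun s => (∫ t in Ioi a, h t) - ∫ t in a..s, h t) =ᶠ[𝓝 y]
      fun s => ∫ t in Ioi s, h t := by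
    filter_upwards [eventually_gt_nhds hay] with s hs
    rw [← intervalIntegral.integral_Ioi_sub_Ioi hi hs.le, sub_sub_cancel]
  have hint : IntervalIntegrable h volume a y :=
    (intervalIntegrable_iff_integrableOn_Ioc_of_le hay.le).2 (hi.mono_set Ioc_subset_Ioi_self)
  refine (((hasDerivAt_const y _).sub (intervalIntegral.integral_hasDerivAt_right hint
    (hc.stronglyMeasurableAtFilter isOpen_Ioi y hay)
    (hc.continuousAt (isOpen_Ioi.mem_nhds hay)))).congr_of_eventuallyEq hsplit.symm).congr_deriv ?_
  ring

/-- `k! / t^(k+1)` is `(-1)^k V̄^(k)(t)` for `V̄ t = 1 / t`. -/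
def FactorialPowBounds (c C : ℝ) (k : ℕ) (h : ℝ → ℝ) : Prop :=
  ∀ t > 0, c * (k ! / t ^ (k + 1)) ≤ h t ∧ h t ≤ C * (k ! / t ^ (k + 1))

namespace FactorialPowBounds

variable {c C : ℝ} {k : ℕ} {h : ℝ → ℝ}

lemma integrableOn (hc : ContinuousOn h (Ioi 0)) (hb : FactorialPowBounds c C (k + 1) h)
    {y : ℝ} (hy : 0 < y) : IntegrableOn h (Ioi y) := by
  have hmem : ∀ᵐ t ∂volume.restrict (Ioi y), 0 < t :=
    (ae_restrict_mem measurableSet_Ioi).mono fun t ht => hy.trans ht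
  refine integrable_of_le_of_le ((hc.mono (Ioi_subset_Ioi hy.le)).aestronglyMeasurable
    measurableSet_Ioi) (hmem.mono fun t ht => (hb t ht).1) (hmem.mono fun t ht => (hb t ht).2)
    ((integrableOn_Ioi_factorial_div_pow k hy).const_mul c)
    ((integrableOn_Ioi_factorial_div_pow k hy).const_mul C)

lemma integral_Ioi (hc : ContinuousOn h (Ioi 0)) (hb : FactorialPowBounds c C (k + 1) h) :
    FactorialPowBounds c C k (fun y => ∫ t in Ioi y, h t) := by
  intro y hy
  have hpow := integrableOn_Ioi_factorial_div_pow k hy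
  rw [← integral_Ioi_factorial_div_pow k hy, ← integral_const_mul, ← integral_const_mul]
  constructor
  · exact setIntegral_mono_on (hpow.const_mul c) (hb.integrableOn hc hy) measurableSet_Ioi
      fun t ht => (hb t (hy.trans ht)).1
  · exact setIntegral_mono_on (hb.integrableOn hc hy) (hpow.const_mul C) measurableSet_Ioi
      fun t ht => (hb t (hy.trans ht)).2

lemma hasDerivAt_integral_Ioi (hc : ContinuousOn h (Ioi 0))
    (hb : FactorialPowBounds c C (k + 1) h) {y : ℝ} (hy : 0 < y) :
    HasDerivAt (fun s => ∫ t in Ioi s, h t) (-h y) y :=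
  _root_.hasDerivAt_integral_Ioi (hb.integrableOn hc (half_pos hy))
    (hc.mono (Ioi_subset_Ioi (half_pos hy).le)) (half_lt_self hy)

lemma continuousOn_and_iterIoiIntegral {g : ℝ → ℝ} (hc : ContinuousOn g (Ioi 0)) {k j : ℕ}
    (hb : FactorialPowBounds c C (k + j) g) :
    ContinuousOn (iterIoiIntegral g j) (Ioi 0) ∧ FactorialPowBounds c C k (iterIoiIntegral g j) := by
  induction j generalizing k with
  | zero => exact ⟨hc, hb⟩
  | succ j ih =>
    obtain ⟨hcj, hbj⟩ := ih (k := k + 1) (by rwa [Nat.add_right_comm])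
    exact ⟨fun y hy => (hbj.hasDerivAt_integral_Ioi hcj hy).continuousAt.continuousWithinAt,
      hbj.integral_Ioi hcj⟩

lemma integrableOn_iterIoiIntegral {g : ℝ → ℝ} (hc : ContinuousOn g (Ioi 0)) {n j : ℕ}
    (hb : FactorialPowBounds c C n g) (hj : j < n) {y : ℝ} (hy : 0 < y) :
    IntegrableOn (iterIoiIntegral g j) (Ioi y) := by
  have hb' : FactorialPowBounds c C (n - j - 1 + 1 + j) g := by
    rwa [show n - j - 1 + 1 + j = n by omega]
  obtain ⟨hcj, hbj⟩ := continuousOn_and_iterIoiIntegral hc hb'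
  exact hbj.integrableOn hcj hy

lemma hasDerivAt_iterIoiIntegral_succ {g : ℝ → ℝ} (hc : ContinuousOn g (Ioi 0)) {n j : ℕ}
    (hb : FactorialPowBounds c C n g) (hj : j < n) {y : ℝ} (hy : 0 < y) :
    HasDerivAt (iterIoiIntegral g (j + 1)) (-iterIoiIntegral g j y) y := by
  have hb' : FactorialPowBounds c C (n - j - 1 + 1 + j) g := by
    rwa [show n - j - 1 + 1 + j = n by omega]
  obtain ⟨hcj, hbj⟩ := continuousOn_and_iterIoiIntegral hc hb'
  exact hbj.hasDerivAt_integral_Ioi hcj hy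

lemma mul_div_mem_Icc {F G : ℝ → ℝ} (hF : FactorialPowBounds c C k F)
    (hG : FactorialPowBounds c C (k + 1) G) (hc : 0 < c) {y : ℝ} (hy : 0 < y) :
    y * G y / F y ∈ Icc (c / C * (k + 1)) (C / c * (k + 1)) := by
  obtain ⟨hF₁, hF₂⟩ := hF y hy
  obtain ⟨hG₁, hG₂⟩ := hG y hy
  set u : ℝ := k ! / y ^ (k + 1) with hu
  have hu₀ : 0 < u := by positivity
  have hshift : y * ((k + 1)! / y ^ (k + 1 + 1)) = (k + 1) * u := by
    push_cast [hu, Nat.factorial_succ]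
    field_simp
    ring
  have hC : 0 < C := hc.trans_le (le_of_mul_le_mul_right (hF₁.trans hF₂) hu₀)
  have hF₀ : 0 < F y := (mul_pos hc hu₀).trans_le hF₁
  have hyG₁ : c * ((k + 1) * u) ≤ y * G y := by
    rw [← hshift, mul_left_comm]
    exact mul_le_mul_of_nonneg_left hG₁ hy.le
  have hyG₂ : y * G y ≤ C * ((k + 1) * u) := by
    rw [← hshift, mul_left_comm]
    exact mul_le_mul_of_nonneg_left hG₂ hy.le
  rw [mem_Icc, le_div_iff₀ hF₀, div_le_iff₀ hF₀]
  constructor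
  · calc c / C * (k + 1) * F y ≤ c / C * (k + 1) * (C * u) := by gcongr
      _ = c * ((k + 1) * u) := by field_simp
      _ ≤ y * G y := hyG₁
  · calc y * G y ≤ C * ((k + 1) * u) := hyG₂
      _ = C / c * (k + 1) * (c * u) := by field_simp
      _ ≤ C / c * (k + 1) * F y := by gcongr

end FactorialPowBounds

lemma factorialPowBounds_factorial_mul_div_pow {c C : ℝ} {f : ℝ → ℝ}
    (hf : ∀ t > (0 : ℝ), c ≤ f t ∧ f t ≤ C) (n : ℕ) :
    FactorialPowBounds c C n (fun t => n ! * f t / t ^ (n + 1)) := fun t ht => by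
  have hpos : (0 : ℝ) ≤ n ! / t ^ (n + 1) := by positivity
  dsimp only
  rw [mul_comm (n ! : ℝ), mul_div_assoc]
  exact ⟨mul_le_mul_of_nonneg_right (hf t ht).1 hpos, mul_le_mul_of_nonneg_right (hf t ht).2 hpos⟩

theorem stmt13_general (n : ℕ) (f : ℝ → ℝ)
    (hfc : ContinuousOn f (Set.Ioi 0))
    (hf12 : ∀ y > (0:ℝ), 1 ≤ f y ∧ f y ≤ 2) :
    (∀ j < n, ∀ y > (0:ℝ),
      MeasureTheory.IntegrableOn
        (iterIoiIntegral (fun t => (n.factorial : ℝ) * f t / t ^ (n + 1)) j)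
        (Set.Ioi y)) ∧
    ∃ dV : ℕ → ℝ → ℝ,
      dV 0 = iterIoiIntegral (fun t => (n.factorial : ℝ) * f t / t ^ (n + 1)) n ∧
      (∀ k < n, ∀ y > (0:ℝ), HasDerivAt (dV k) (dV (k + 1) y) y) ∧
      (∀ y > (0:ℝ), dV n y = (-1 : ℝ) ^ n * ((n.factorial : ℝ) * f y / y ^ (n + 1))) ∧
      (∀ k ≤ n, ∀ y > (0:ℝ),
        (k.factorial : ℝ) / y ^ (k + 1) ≤ (-1 : ℝ) ^ k * dV k y ∧
        (-1 : ℝ) ^ k * dV k y ≤ 2 * (k.factorial : ℝ) / y ^ (k + 1)) ∧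
      (∀ k < n, ∀ y > (0:ℝ),
        ((k : ℝ) + 1) / 2 ≤ -(y * dV (k + 1) y) / dV k y ∧
        -(y * dV (k + 1) y) / dV k y ≤ 2 * ((k : ℝ) + 1)) := by
  set g : ℝ → ℝ := fun t => (n.factorial : ℝ) * f t / t ^ (n + 1)
  have hgc : ContinuousOn g (Ioi 0) := (continuousOn_const.mul hfc).div
    (continuous_pow _).continuousOn fun t ht => pow_ne_zero _ (ne_of_gt ht)
  have hgb : FactorialPowBounds 1 2 n g := factorialPowBounds_factorial_mul_div_pow hf12 n
  have hV : ∀ k ≤ n, FactorialPowBounds 1 2 k (iterIoiIntegral g (n - k)) := fun k hk =>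
    (FactorialPowBounds.continuousOn_and_iterIoiIntegral hgc (by rwa [Nat.add_sub_cancel' hk])).2
  refine ⟨fun j hj y hy => hgb.integrableOn_iterIoiIntegral hgc hj hy,
    fun k y => (-1) ^ k * iterIoiIntegral g (n - k) y, by simp, fun k hk y hy => ?_,
    fun y _ => by simp [iterIoiIntegral, g], fun k hk y hy => ?_, fun k hk y hy => ?_⟩
  · beta_reduce
    rw [show n - k = n - (k + 1) + 1 by omega]
    exact ((hgb.hasDerivAt_iterIoiIntegral_succ hgc (by omega) hy).const_mul _).congr_deriv
      (by ring)
  · rw [← mul_assoc, pow_mul_pow_eq_one k (by norm_num), one_mul, mul_div_assoc]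
    simpa only [one_mul] using hV k hk y hy
  · have hratio := (hV k hk.le).mul_div_mem_Icc (hV (k + 1) hk) one_pos hy
    have hsign : ∀ A B : ℝ, -(y * ((-1) ^ (k + 1) * B)) / ((-1) ^ k * A) = y * B / A :=
      fun A B => by
        rw [show -(y * ((-1 : ℝ) ^ (k + 1) * B)) = (-1) ^ k * (y * B) by ring,
          mul_div_mul_left _ _ (pow_ne_zero k (neg_ne_zero.2 one_ne_zero))]
    beta_reduce
    rw [hsign]
    constructor <;> linarith [hratio.1, hratio.2]

/-- Fix `n ≥ 1`, let `V̄(y) = 1/y` (so `(−1)^k V̄^{(k)}(y) = k! y^{−k−1}`)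
and let `f : (0,∞) → ℝ` be continuous with `1 ≤ f ≤ 2`.  Define
`V(y) = ∫_y^∞ ⋯ ∫_{y_{n−1}}^∞ n! y_n^{−n−1} f(y_n) dy_n ⋯ dy₁` (an `n`-fold iterated
integral).  Then `V` is well defined and finite (each level is integrable), `n`-times
differentiable with `V^{(n)}(y) = (−1)^n n! f(y) y^{−n−1}`, it satisfies
`k! y^{−k−1} ≤ (−1)^k V^{(k)}(y) ≤ 2 k! y^{−k−1}` for `k = 0,…,n`, and consequently
`(k+1)/2 ≤ −y V^{(k+1)}(y)/V^{(k)}(y) ≤ 2(k+1)` for `k = 0,…,n−1`. -/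
theorem stmt13 (n : ℕ) (hn : 1 ≤ n) (f : ℝ → ℝ)
    (hfc : ContinuousOn f (Set.Ioi 0))
    (hf12 : ∀ y > (0:ℝ), 1 ≤ f y ∧ f y ≤ 2) :
    (∀ j < n, ∀ y > (0:ℝ),
      MeasureTheory.IntegrableOn
        (iterIoiIntegral (fun t => (n.factorial : ℝ) * f t / t ^ (n + 1)) j)
        (Set.Ioi y)) ∧
    ∃ dV : ℕ → ℝ → ℝ,
      dV 0 = iterIoiIntegral (fun t => (n.factorial : ℝ) * f t / t ^ (n + 1)) n ∧
      (∀ k < n, ∀ y > (0:ℝ), HasDerivAt (dV k) (dV (k + 1) y) y) ∧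
      (∀ y > (0:ℝ), dV n y = (-1 : ℝ) ^ n * ((n.factorial : ℝ) * f y / y ^ (n + 1))) ∧
      (∀ k ≤ n, ∀ y > (0:ℝ),
        (k.factorial : ℝ) / y ^ (k + 1) ≤ (-1 : ℝ) ^ k * dV k y ∧
        (-1 : ℝ) ^ k * dV k y ≤ 2 * (k.factorial : ℝ) / y ^ (k + 1)) ∧
      (∀ k < n, ∀ y > (0:ℝ),
        ((k : ℝ) + 1) / 2 ≤ -(y * dV (k + 1) y) / dV k y ∧
        -(y * dV (k + 1) y) / dV k y ≤ 2 * ((k : ℝ) + 1)) :=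
  stmt13_general n f hfc hf12
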